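/- Uniqueness for the regularized periodic problem (Theorem 2.4): let μ > 0, ν ≥ 0, ε > 0 and i ∈ {0,1}. Let A : ℝ×ℝ² → ℝ and C : ℝ×ℝ² → ℝ² be C¹ on an open set containing ℝ×closure(Ω), 1-periodic in their first argument θ, with A ≥ 0, and let g : ℝ² → ℝ be continuous. If S₁ and S₂ are both C¹ in θ, C² in x on an open set containing ℝ×closure(Ω), 1-periodic in θ, and satisfy μS + ∂S/∂θ − (1/εⁱ)∇·((A(θ,·)+ν)∇S(θ,·)) = (1/εⁱ)∇·C(θ,·) pointwise in Ω and ∂S/∂n + S = g pointwise on ∂Ω for every θ, then S₁ = S₂ on ℝ×closure(Ω). -/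

import Mathlib

/-!
The difference `W = S₁ - S₂` solves the homogeneous problem
`μ W + ∂θW = ε⁻ⁱ ∇·((A + ν) ∇W)` with the Robin condition `∂W/∂n + W = 0`. Multiplying by
`W` and integrating over `Ω`, the divergence theorem turns the right-hand side into
`-ε⁻ⁱ (∫_Ω (A + ν) |∇W|² + ∫_∂Ω (A + ν) W²) ≤ 0`, so `μ ∫_Ω W² + ∫_Ω W ∂θW ≤ 0` for every
`θ`. Over one period the second term integrates to zero, because `W ∂θW = ∂θ(W² / 2)` and `W` is
periodic. Hence `∫₀¹ ∫_Ω W² = 0`, and `W` vanishes by continuity.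
-/

open MeasureTheory Set Real
open scoped RealInnerProductSpace

noncomputable section

abbrev E2 : Type := EuclideanSpace ℝ (Fin 2)

/-- Divergence of a vector field on the plane. -/
def vdiv (F : E2 → E2) (x : E2) : ℝ := ∑ i, fderiv ℝ F x (EuclideanSpace.single i 1) i

/-- A nonempty bounded open set in the plane with `C¹` boundary described by a defining
function `Φ`. -/
structure C1Domain where
  Ω : Set E2
  Φ : E2 → ℝ
  nonempty : Ω.Nonempty
  bounded : Bornology.IsBounded Ω
  isOpen : IsOpen Ω
  smoothΦ : ContDiff ℝ 1 Φ
  eq_dom : Ω = {x | Φ x < 0}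
  eq_bd : frontier Ω = {x | Φ x = 0}
  grad_ne : ∀ x ∈ frontier Ω, gradient Φ x ≠ 0

/-- Outward unit normal. -/
def nml (D : C1Domain) (x : E2) : E2 := ‖gradient D.Φ x‖⁻¹ • gradient D.Φ x

/-- The divergence theorem holds on the domain. -/
def DivergenceThm (D : C1Domain) : Prop :=
  ∀ F : E2 → E2, (∃ U : Set E2, IsOpen U ∧ closure D.Ω ⊆ U ∧ ContDiffOn ℝ 1 F U) →
    (∫ x in D.Ω, vdiv F x) = ∫ x in frontier D.Ω, ⟪F x, nml D x⟫ ∂μH[1]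

/-- `S(θ,x)` is `C¹` in `θ` and `C²` in `x` on an open set containing `ℝ × closure Ω`,
and is `1`-periodic in `θ`. -/
def PeriodicReg (D : C1Domain) (S : ℝ → E2 → ℝ) : Prop :=
  (∃ U : Set (ℝ × E2), IsOpen U ∧ ((univ : Set ℝ) ×ˢ closure D.Ω) ⊆ U ∧
    ContDiffOn ℝ 1 (fun p : ℝ × E2 => S p.1 p.2) U ∧
    ∀ θ : ℝ, ContDiffOn ℝ 2 (fun x => S θ x) {x | (θ, x) ∈ U}) ∧
  ∀ θ x, S (θ + 1) x = S θ x

theorem gradient_fun_sub {F : Type*} [NormedAddCommGroup F] [InnerProductSpace ℝ F]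
    [CompleteSpace F] {f g : F → ℝ} {x : F} (hf : DifferentiableAt ℝ f x)
    (hg : DifferentiableAt ℝ g x) :
    gradient (fun y => f y - g y) x = gradient f x - gradient g x := by
  simp only [gradient, fderiv_fun_sub hf hg, map_sub]

section EuclideanSpace

variable {ι : Type*} [Fintype ι] [DecidableEq ι]

theorem gradient_apply_eq_fderiv (f : EuclideanSpace ℝ ι → ℝ) (x : EuclideanSpace ℝ ι)
    (j : ι) :
    gradient f x j = fderiv ℝ f x (EuclideanSpace.single j 1) := by
  rw [← inner_gradient_left, EuclideanSpace.inner_single_right, one_mul, RCLike.conj_to_real]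

theorem ContDiffOn.gradient {f : EuclideanSpace ℝ ι → ℝ} {U : Set (EuclideanSpace ℝ ι)}
    (hU : IsOpen U) (hf : ContDiffOn ℝ 2 f U) : ContDiffOn ℝ 1 (gradient f) U := by
  refine contDiffOn_piLp' 2 fun j => ?_
  simp only [gradient_apply_eq_fderiv]
  exact (ContinuousLinearMap.apply ℝ ℝ (EuclideanSpace.single j 1)).contDiff.comp_contDiffOn
    (hf.fderiv_of_isOpen (m := 1) hU (by norm_num))

end EuclideanSpace

theorem vdiv_fun_smul {f : E2 → ℝ} {G : E2 → E2} {x : E2}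
    (hf : DifferentiableAt ℝ f x) (hG : DifferentiableAt ℝ G x) :
    vdiv (fun y => f y • G y) x = ⟪gradient f x, G x⟫ + f x * vdiv G x := by
  simp only [vdiv, fderiv_fun_smul hf hG, PiLp.inner_apply, Finset.mul_sum,
    ← Finset.sum_add_distrib, gradient_apply_eq_fderiv]
  refine Finset.sum_congr rfl fun j _ => ?_
  simp only [add_apply, smul_apply, ContinuousLinearMap.smulRight_apply, PiLp.add_apply,
    PiLp.smul_apply, smul_eq_mul, RCLike.inner_apply, ringHom_apply]
  ring

theorem vdiv_fun_sub {F G : E2 → E2} {x : E2} (hF : DifferentiableAt ℝ F x)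
    (hG : DifferentiableAt ℝ G x) :
    vdiv (fun y => F y - G y) x = vdiv F x - vdiv G x := by
  simp [vdiv, fderiv_fun_sub hF hG, Finset.sum_sub_distrib]

theorem Filter.EventuallyEq.vdiv_eq {F G : E2 → E2} {x : E2} (h : F =ᶠ[nhds x] G) :
    vdiv F x = vdiv G x := by
  simp only [vdiv, h.fderiv_eq]

theorem ContDiffOn.continuousOn_vdiv {F : E2 → E2} {U : Set E2} (hU : IsOpen U)
    (hF : ContDiffOn ℝ 1 F U) : ContinuousOn (vdiv F) U := by
  refine continuousOn_finsetSum _ fun j _ => ?_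
  have hev : Continuous fun L : E2 →L[ℝ] E2 => L (EuclideanSpace.single j 1) j :=
    (PiLp.continuous_apply 2 _ j).comp (ContinuousLinearMap.apply ℝ E2 _).continuous
  exact hev.comp_continuousOn (hF.continuousOn_fderiv_of_isOpen hU le_rfl)

theorem ContDiffOn.hasDerivAt_fst {E F : Type*} [NormedAddCommGroup E] [NormedSpace ℝ E]
    [NormedAddCommGroup F] [NormedSpace ℝ F] {f : ℝ × E → F} {U : Set (ℝ × E)}
    (hU : IsOpen U) (hf : ContDiffOn ℝ 1 f U) {p : ℝ × E} (hp : p ∈ U) :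
    HasDerivAt (fun s => f (s, p.2)) (fderiv ℝ f p (1, 0)) p.1 :=
  ((hf.contDiffAt (hU.mem_nhds hp)).differentiableAt one_ne_zero).hasFDerivAt.comp_hasDerivAt p.1
    ((hasDerivAt_id p.1).prodMk (hasDerivAt_const p.1 p.2))

theorem vdiv_smul_gradient_sub {a f g : E2 → ℝ} {V : Set E2} (hV : IsOpen V)
    (ha : ContDiffOn ℝ 1 a V) (hf : ContDiffOn ℝ 2 f V) (hg : ContDiffOn ℝ 2 g V) {x : E2}
    (hx : x ∈ V) :
    vdiv (fun y => a y • gradient (fun z => f z - g z) y) x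
      = vdiv (fun y => a y • gradient f y) x - vdiv (fun y => a y • gradient g y) x := by
  rw [← vdiv_fun_sub (F := fun y => a y • gradient f y) (G := fun y => a y • gradient g y)
    (((ha.smul (hf.gradient hV)).contDiffAt (hV.mem_nhds hx)).differentiableAt one_ne_zero)
    (((ha.smul (hg.gradient hV)).contDiffAt (hV.mem_nhds hx)).differentiableAt one_ne_zero)]
  refine Filter.EventuallyEq.vdiv_eq ?_
  filter_upwards [hV.mem_nhds hx] with y hy
  rw [gradient_fun_sub ((hf.contDiffAt (hV.mem_nhds hy)).differentiableAt two_ne_zero)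
    ((hg.contDiffAt (hV.mem_nhds hy)).differentiableAt two_ne_zero), smul_sub]

theorem setIntegral_mul_vdiv_nonpos_of_robin {D : C1Domain} (hdiv : DivergenceThm D)
    {a w : E2 → ℝ} {V : Set E2} (hV : IsOpen V) (hΩV : closure D.Ω ⊆ V)
    (ha : ContDiffOn ℝ 1 a V) (hw : ContDiffOn ℝ 2 w V)
    (ha₀ : ∀ x ∈ closure D.Ω, 0 ≤ a x)
    (hrobin : ∀ x ∈ frontier D.Ω, ⟪gradient w x, nml D x⟫ + w x = 0) :
    ∫ x in D.Ω, w x * vdiv (fun y => a y • gradient w y) x ≤ 0 := by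
  set G : E2 → E2 := fun y => a y • gradient w y
  have hG : ContDiffOn ℝ 1 G V := ha.smul (hw.gradient hV)
  have hint {f : E2 → ℝ} (hf : ContinuousOn f V) : IntegrableOn f D.Ω :=
    ((hf.mono hΩV).integrableOn_compact D.bounded.isCompact_closure).mono_set subset_closure
  have hflux : ∫ x in frontier D.Ω, ⟪w x • G x, nml D x⟫ ∂μH[1] ≤ 0 := by
    refine integral_nonpos_of_ae <|
      ae_restrict_of_forall_mem isClosed_frontier.measurableSet fun x hx => ?_
    have hwx : w x = -⟪gradient w x, nml D x⟫ := eq_neg_of_add_eq_zero_right (hrobin x hx)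
    have ha₀x := ha₀ x (frontier_subset_closure hx)
    have hFx : ⟪w x • G x, nml D x⟫ = -(a x * ⟪gradient w x, nml D x⟫ ^ 2) := by
      simp only [G, real_inner_smul_left, hwx]
      ring
    show ⟪w x • G x, nml D x⟫ ≤ 0
    rw [hFx]
    exact neg_nonpos.2 (mul_nonneg ha₀x (sq_nonneg _))
  have hsplit : ∀ x ∈ D.Ω,
      vdiv (fun y => w y • G y) x = a x * ‖gradient w x‖ ^ 2 + w x * vdiv G x := by
    intro x hx
    have hxV := hΩV (subset_closure hx)
    rw [vdiv_fun_smul ((hw.contDiffAt (hV.mem_nhds hxV)).differentiableAt two_ne_zero)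
      ((hG.contDiffAt (hV.mem_nhds hxV)).differentiableAt one_ne_zero), real_inner_smul_right,
      real_inner_self_eq_norm_sq]
  have hdirichlet : 0 ≤ ∫ x in D.Ω, a x * ‖gradient w x‖ ^ 2 :=
    setIntegral_nonneg D.isOpen.measurableSet fun x hx =>
      mul_nonneg (ha₀ x (subset_closure hx)) (sq_nonneg _)
  have hdivF := hdiv (fun y => w y • G y) ⟨V, hV, hΩV, (hw.of_le one_le_two).smul hG⟩
  have hint₁ : IntegrableOn (fun x => a x * ‖gradient w x‖ ^ 2) D.Ω :=
    hint (ha.continuousOn.mul ((hw.gradient hV).continuousOn.norm.pow 2))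
  have hint₂ : IntegrableOn (fun x => w x * vdiv G x) D.Ω :=
    hint (hw.continuousOn.mul (hG.continuousOn_vdiv hV))
  rw [setIntegral_congr_fun D.isOpen.measurableSet hsplit, integral_add hint₁ hint₂] at hdivF
  linarith

theorem energy_nonpos_of_robin {D : C1Domain} (hdiv : DivergenceThm D)
    {a w w' : E2 → ℝ} {μ c : ℝ} (hc : 0 ≤ c) {V : Set E2} (hV : IsOpen V)
    (hΩV : closure D.Ω ⊆ V) (ha : ContDiffOn ℝ 1 a V) (hw : ContDiffOn ℝ 2 w V)
    (hw' : ContinuousOn w' (closure D.Ω)) (ha₀ : ∀ x ∈ closure D.Ω, 0 ≤ a x)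
    (heq : ∀ x ∈ D.Ω, μ * w x + w' x = c * vdiv (fun y => a y • gradient w y) x)
    (hrobin : ∀ x ∈ frontier D.Ω, ⟪gradient w x, nml D x⟫ + w x = 0) :
    μ * (∫ x in D.Ω, w x ^ 2) + ∫ x in D.Ω, w x * w' x ≤ 0 := by
  have hK := D.bounded.isCompact_closure
  have hwK : ContinuousOn w (closure D.Ω) := hw.continuousOn.mono hΩV
  have hint {f : E2 → ℝ} (hf : ContinuousOn f (closure D.Ω)) : IntegrableOn f D.Ω :=
    (hf.integrableOn_compact hK).mono_set subset_closure
  calc μ * (∫ x in D.Ω, w x ^ 2) + ∫ x in D.Ω, w x * w' x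
      = ∫ x in D.Ω, w x * (μ * w x + w' x) := by
        have hint₁ : IntegrableOn (fun x => w x ^ 2) D.Ω := hint (hwK.pow 2)
        have hint₂ : IntegrableOn (fun x => w x * w' x) D.Ω := hint (hwK.mul hw')
        rw [← integral_const_mul, ← integral_add (hint₁.const_mul μ) hint₂]
        simp only [mul_add, sq, mul_left_comm]
    _ = c * ∫ x in D.Ω, w x * vdiv (fun y => a y • gradient w y) x := by
        rw [← integral_const_mul]
        refine setIntegral_congr_fun D.isOpen.measurableSet fun x hx => ?_
        simp only [heq x hx, mul_left_comm]
    _ ≤ 0 := mul_nonpos_of_nonneg_of_nonpos hc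
        (setIntegral_mul_vdiv_nonpos_of_robin hdiv hV hΩV ha hw ha₀ hrobin)

theorem integral_Ioc_mul_deriv_eq_zero {f f' : ℝ → ℝ} (hf : ∀ t, HasDerivAt f (f' t) t)
    (hf' : ContinuousOn f' (uIcc 0 1)) (hper : f 1 = f 0) :
    ∫ t in Ioc 0 1, f t * f' t = 0 := by
  have hsq (t : ℝ) (_ : t ∈ uIcc (0 : ℝ) 1) :
      HasDerivAt (fun s => f s ^ 2 / 2) (f t * f' t) t :=
    (((hf t).fun_pow 2).div_const 2).congr_deriv (by ring)
  have hcont : ContinuousOn (fun t => f t * f' t) (uIcc 0 1) :=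
    (HasDerivAt.continuousOn fun t _ => hf t).mul hf'
  rw [← intervalIntegral.integral_of_le zero_le_one,
    intervalIntegral.integral_eq_sub_of_hasDerivAt hsq hcont.intervalIntegrable, hper, sub_self]

theorem eq_zero_of_periodic_of_energy_nonpos {E : Type*} [TopologicalSpace E]
    [T2Space E] [SecondCountableTopology E] [MeasurableSpace E] [OpensMeasurableSpace E]
    (ν : Measure E) [IsFiniteMeasureOnCompacts ν] [ν.IsOpenPosMeasure] [SFinite ν]
    {Ω : Set E} (hΩ : IsOpen Ω) (hK : IsCompact (closure Ω)) {μ : ℝ} (hμ : 0 < μ)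
    {W W' : ℝ → E → ℝ}
    (hW : ContinuousOn (fun p : ℝ × E => W p.1 p.2) (univ ×ˢ closure Ω))
    (hW' : ContinuousOn (fun p : ℝ × E => W' p.1 p.2) (univ ×ˢ closure Ω))
    (hderiv : ∀ θ, ∀ x ∈ Ω, HasDerivAt (W · x) (W' θ x) θ)
    (hper : ∀ θ x, W (θ + 1) x = W θ x)
    (henergy :
      ∀ θ, μ * (∫ x in Ω, W θ x ^ 2 ∂ν) + ∫ x in Ω, W θ x * W' θ x ∂ν ≤ 0) :
    ∀ θ, ∀ x ∈ closure Ω, W θ x = 0 := by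
  set P := (volume.restrict (Ioc (0 : ℝ) 1)).prod (ν.restrict Ω)
  have hP : P = (volume.prod ν).restrict (Ioc 0 1 ×ˢ Ω) := Measure.prod_restrict _ _
  have hint {f : ℝ × E → ℝ} (hf : ContinuousOn f (univ ×ˢ closure Ω)) :
      Integrable f P := by
    rw [hP]
    exact ((hf.mono (prod_mono (subset_univ _) subset_rfl)).integrableOn_compact
      (isCompact_Icc.prod hK)).mono_set (prod_mono Ioc_subset_Icc_self subset_closure)
  have hsq : Integrable (fun p : ℝ × E => W p.1 p.2 ^ 2) P := hint (hW.pow 2)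
  have hcross : Integrable (fun p : ℝ × E => W p.1 p.2 * W' p.1 p.2) P := hint (hW.mul hW')
  have hcross_zero : ∫ p, W p.1 p.2 * W' p.1 p.2 ∂P = 0 := by
    rw [integral_prod_symm _ hcross]
    refine (setIntegral_congr_fun hΩ.measurableSet fun x hx => ?_).trans (integral_zero _ _)
    exact integral_Ioc_mul_deriv_eq_zero (fun t => hderiv t x hx)
      (hW'.comp (Continuous.prodMk_left x).continuousOn
        fun t _ => ⟨mem_univ t, subset_closure hx⟩)
      (by simpa using hper 0 x)
  have hsq_nonpos : ∫ p, W p.1 p.2 ^ 2 ∂P ≤ 0 := by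
    have hsum : μ * (∫ p, W p.1 p.2 ^ 2 ∂P) + ∫ p, W p.1 p.2 * W' p.1 p.2 ∂P ≤ 0 := by
      rw [integral_prod _ hsq, integral_prod _ hcross, ← integral_const_mul,
        ← integral_add (hsq.integral_prod_left.const_mul μ) hcross.integral_prod_left]
      exact integral_nonpos henergy
    rw [hcross_zero, add_zero] at hsum
    exact nonpos_of_mul_nonpos_right hsum hμ
  have hae : (fun p : ℝ × E => W p.1 p.2 ^ 2) =ᵐ[P] 0 :=
    (integral_eq_zero_iff_of_nonneg (fun p => sq_nonneg _) hsq).1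
      (hsq_nonpos.antisymm (integral_nonneg fun p => sq_nonneg _))
  have hopen : EqOn (fun p : ℝ × E => W p.1 p.2 ^ 2) 0 (Ioo 0 1 ×ˢ Ω) := by
    rw [hP] at hae
    exact Measure.eqOn_open_of_ae_eq
      (ae_restrict_of_ae_restrict_of_subset (prod_mono Ioo_subset_Ioc_self subset_rfl) hae)
      (isOpen_Ioo.prod hΩ) ((hW.pow 2).mono (prod_mono (subset_univ _) subset_closure))
      continuousOn_const
  have hperiod : EqOn (fun p : ℝ × E => W p.1 p.2 ^ 2) 0 (Icc 0 1 ×ˢ closure Ω) := by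
    refine hopen.of_subset_closure ((hW.pow 2).mono (prod_mono (subset_univ _) subset_rfl))
      continuousOn_const (prod_mono Ioo_subset_Icc_self subset_closure) ?_
    rw [closure_prod_eq, closure_Ioo zero_ne_one]
  intro θ x hx
  obtain ⟨t, ht, hθt⟩ := (show Function.Periodic (W · x) 1 from (hper · x)).exists_mem_Ico₀
    zero_lt_one θ
  rw [hθt]
  exact pow_eq_zero_iff two_ne_zero |>.1 (hperiod (x := (t, x)) ⟨Ico_subset_Icc_self ht, hx⟩)

namespace PeriodicReg

variable {D : C1Domain} {S S₁ S₂ : ℝ → E2 → ℝ}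

theorem sub (h₁ : PeriodicReg D S₁) (h₂ : PeriodicReg D S₂) :
    PeriodicReg D (fun θ x => S₁ θ x - S₂ θ x) := by
  obtain ⟨⟨U₁, hU₁, hsub₁, hjoint₁, hslice₁⟩, hper₁⟩ := h₁
  obtain ⟨⟨U₂, hU₂, hsub₂, hjoint₂, hslice₂⟩, hper₂⟩ := h₂
  refine ⟨⟨U₁ ∩ U₂, hU₁.inter hU₂, subset_inter hsub₁ hsub₂,
    (hjoint₁.mono inter_subset_left).sub (hjoint₂.mono inter_subset_right), fun θ => ?_⟩,
    fun θ x => by simp only [hper₁, hper₂]⟩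
  exact ((hslice₁ θ).mono fun x hx => hx.1).sub ((hslice₂ θ).mono fun x hx => hx.2)

theorem exists_contDiffOn (h : PeriodicReg D S) (θ : ℝ) :
    ∃ V, IsOpen V ∧ closure D.Ω ⊆ V ∧ ContDiffOn ℝ 2 (S θ) V :=
  let ⟨⟨_, hU, hsub, _, hslice⟩, _⟩ := h
  ⟨_, hU.preimage (Continuous.prodMk_right θ), fun _ hx => hsub ⟨mem_univ θ, hx⟩,
    hslice θ⟩

theorem continuousOn (h : PeriodicReg D S) :
    ContinuousOn (fun p : ℝ × E2 => S p.1 p.2) (univ ×ˢ closure D.Ω) :=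
  let ⟨⟨_, _, hsub, hjoint, _⟩, _⟩ := h
  hjoint.continuousOn.mono hsub

theorem differentiableAt (h : PeriodicReg D S) (θ : ℝ) {x : E2} (hx : x ∈ closure D.Ω) :
    DifferentiableAt ℝ (S · x) θ :=
  let ⟨⟨_, hU, hsub, hjoint, _⟩, _⟩ := h
  (hjoint.hasDerivAt_fst hU (p := (θ, x)) (hsub ⟨mem_univ θ, hx⟩)).differentiableAt

theorem continuousOn_deriv (h : PeriodicReg D S) :
    ContinuousOn (fun p : ℝ × E2 => deriv (S · p.2) p.1) (univ ×ˢ closure D.Ω) := by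
  obtain ⟨⟨U, hU, hsub, hjoint, _⟩, _⟩ := h
  refine ContinuousOn.congr (f := fun p => fderiv ℝ (fun q : ℝ × E2 => S q.1 q.2) p (1, 0))
    ?_ fun p hp => (hjoint.hasDerivAt_fst hU (hsub hp)).deriv
  exact ((ContinuousLinearMap.apply ℝ ℝ ((1 : ℝ), (0 : E2))).continuous.comp_continuousOn
    (hjoint.continuousOn_fderiv_of_isOpen hU le_rfl)).mono hsub

end PeriodicReg

theorem stmt6_general
    (D : C1Domain) (hdiv : DivergenceThm D)
    (μ ν ε : ℝ) (hμ : 0 < μ) (hν : 0 ≤ ν) (hε : 0 < ε)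
    (i : ℕ)
    (A : ℝ → E2 → ℝ) (C : ℝ → E2 → E2)
    (UA : Set (ℝ × E2)) (hUAopen : IsOpen UA)
    (hUAsub : (univ : Set ℝ) ×ˢ closure D.Ω ⊆ UA)
    (hA : ContDiffOn ℝ 1 (fun p : ℝ × E2 => A p.1 p.2) UA)
    (hApos : ∀ θ x, 0 ≤ A θ x)
    (g : E2 → ℝ)
    (S₁ S₂ : ℝ → E2 → ℝ)
    (hreg1 : PeriodicReg D S₁) (hreg2 : PeriodicReg D S₂)
    (hpde1 : ∀ θ : ℝ, ∀ x ∈ D.Ω,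
      μ * S₁ θ x + deriv (fun s => S₁ s x) θ
          - (1 / ε ^ i) * vdiv (fun y => (A θ y + ν) • gradient (S₁ θ) y) x
        = (1 / ε ^ i) * vdiv (C θ) x)
    (hpde2 : ∀ θ : ℝ, ∀ x ∈ D.Ω,
      μ * S₂ θ x + deriv (fun s => S₂ s x) θ
          - (1 / ε ^ i) * vdiv (fun y => (A θ y + ν) • gradient (S₂ θ) y) x
        = (1 / ε ^ i) * vdiv (C θ) x)
    (hbc1 : ∀ θ : ℝ, ∀ x ∈ frontier D.Ω,
      ⟪gradient (S₁ θ) x, nml D x⟫ + S₁ θ x = g x)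
    (hbc2 : ∀ θ : ℝ, ∀ x ∈ frontier D.Ω,
      ⟪gradient (S₂ θ) x, nml D x⟫ + S₂ θ x = g x) :
    ∀ θ : ℝ, ∀ x ∈ closure D.Ω, S₁ θ x = S₂ θ x := by
  have hW := hreg1.sub hreg2
  suffices ∀ θ, ∀ x ∈ closure D.Ω, S₁ θ x - S₂ θ x = 0 from
    fun θ x hx => sub_eq_zero.1 (this θ x hx)
  refine eq_zero_of_periodic_of_energy_nonpos volume D.isOpen D.bounded.isCompact_closure hμ
    hW.continuousOn hW.continuousOn_deriv
    (fun θ x hx => (hW.differentiableAt θ (subset_closure hx)).hasDerivAt) hW.2 fun θ => ?_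
  obtain ⟨V₁, hV₁, hΩV₁, hS₁⟩ := hreg1.exists_contDiffOn θ
  obtain ⟨V₂, hV₂, hΩV₂, hS₂⟩ := hreg2.exists_contDiffOn θ
  set V := V₁ ∩ V₂ ∩ {x | (θ, x) ∈ UA}
  have hV : IsOpen V := (hV₁.inter hV₂).inter (hUAopen.preimage (Continuous.prodMk_right θ))
  have hΩV : closure D.Ω ⊆ V := fun x hx =>
    ⟨⟨hΩV₁ hx, hΩV₂ hx⟩, hUAsub ⟨mem_univ θ, hx⟩⟩
  have hS₁V : ContDiffOn ℝ 2 (S₁ θ) V := hS₁.mono fun x hx => hx.1.1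
  have hS₂V : ContDiffOn ℝ 2 (S₂ θ) V := hS₂.mono fun x hx => hx.1.2
  have ha : ContDiffOn ℝ 1 (fun y => A θ y + ν) V :=
    (hA.comp (contDiff_const.prodMk contDiff_id).contDiffOn fun x hx => hx.2).add contDiffOn_const
  refine energy_nonpos_of_robin hdiv (by positivity : 0 ≤ 1 / ε ^ i) hV hΩV ha
    (hS₁V.sub hS₂V)
    (hW.continuousOn_deriv.comp (Continuous.prodMk_right θ).continuousOn
      fun x hx => ⟨mem_univ θ, hx⟩)
    (fun x _ => add_nonneg (hApos θ x) hν) (fun x hx => ?_) (fun x hx => ?_)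
  · have hxV := hΩV (subset_closure hx)
    rw [deriv_fun_sub (hreg1.differentiableAt θ (subset_closure hx))
      (hreg2.differentiableAt θ (subset_closure hx)),
      vdiv_smul_gradient_sub hV ha hS₁V hS₂V hxV]
    linear_combination hpde1 θ x hx - hpde2 θ x hx
  · have hxV := hΩV (frontier_subset_closure hx)
    rw [gradient_fun_sub ((hS₁V.contDiffAt (hV.mem_nhds hxV)).differentiableAt two_ne_zero)
      ((hS₂V.contDiffAt (hV.mem_nhds hxV)).differentiableAt two_ne_zero), inner_sub_left]
    linear_combination hbc1 θ x hx - hbc2 θ x hx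

/-- uniqueness for the regularized periodic Robin problem
`μS + ∂S/∂θ − (1/εⁱ)∇·((A+ν)∇S) = (1/εⁱ)∇·C` (Theorem 2.4). -/
theorem stmt6
    (D : C1Domain) (hdiv : DivergenceThm D)
    (μ ν ε : ℝ) (hμ : 0 < μ) (hν : 0 ≤ ν) (hε : 0 < ε)
    (i : ℕ) (hi : i = 0 ∨ i = 1)
    (A : ℝ → E2 → ℝ) (C : ℝ → E2 → E2)
    (UA : Set (ℝ × E2)) (hUAopen : IsOpen UA)
    (hUAsub : (univ : Set ℝ) ×ˢ closure D.Ω ⊆ UA)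
    (hA : ContDiffOn ℝ 1 (fun p : ℝ × E2 => A p.1 p.2) UA)
    (hC : ContDiffOn ℝ 1 (fun p : ℝ × E2 => C p.1 p.2) UA)
    (hAper : ∀ θ x, A (θ + 1) x = A θ x)
    (hCper : ∀ θ x, C (θ + 1) x = C θ x)
    (hApos : ∀ θ x, 0 ≤ A θ x)
    (g : E2 → ℝ) (hg : Continuous g)
    (S₁ S₂ : ℝ → E2 → ℝ)
    (hreg1 : PeriodicReg D S₁) (hreg2 : PeriodicReg D S₂)
    (hpde1 : ∀ θ : ℝ, ∀ x ∈ D.Ω,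
      μ * S₁ θ x + deriv (fun s => S₁ s x) θ
          - (1 / ε ^ i) * vdiv (fun y => (A θ y + ν) • gradient (S₁ θ) y) x
        = (1 / ε ^ i) * vdiv (C θ) x)
    (hpde2 : ∀ θ : ℝ, ∀ x ∈ D.Ω,
      μ * S₂ θ x + deriv (fun s => S₂ s x) θ
          - (1 / ε ^ i) * vdiv (fun y => (A θ y + ν) • gradient (S₂ θ) y) x
        = (1 / ε ^ i) * vdiv (C θ) x)
    (hbc1 : ∀ θ : ℝ, ∀ x ∈ frontier D.Ω,
      ⟪gradient (S₁ θ) x, nml D x⟫ + S₁ θ x = g x)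
    (hbc2 : ∀ θ : ℝ, ∀ x ∈ frontier D.Ω,
      ⟪gradient (S₂ θ) x, nml D x⟫ + S₂ θ x = g x) :
    ∀ θ : ℝ, ∀ x ∈ closure D.Ω, S₁ θ x = S₂ θ x :=
  stmt6_general D hdiv μ ν ε hμ hν hε i A C UA hUAopen hUAsub hA hApos g S₁ S₂ hreg1 hreg2 hpde1
    hpde2 hbc1 hbc2

end
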